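/- For the StackMST(0,0) game whose red tree is a star S with t ≥ 3 edges and nonnegative edge costs, the optimal revenue satisfies r*(S, c) ≥ (2/3)·c(S). -/

import Mathlib

namespace StackMST

variable {V : Type*}

/-- Sum of an edge-weight function over a set of edges. -/
noncomputable def esum (w : Sym2 V → ℝ) (s : Set (Sym2 V)) : ℝ := ∑ᶠ e ∈ s, w e

/-- `M` is a spanning tree of `G`. -/
def IsSpanningTreeOf (G M : SimpleGraph V) : Prop := M ≤ G ∧ M.IsTree

/-- Total weight of `M`, where red edges (the edges of `T`) are weighted by `c`
and all other (blue) edges are weighted by `p`. -/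
noncomputable def weight (T : SimpleGraph V) (c p : Sym2 V → ℝ) (M : SimpleGraph V) : ℝ :=
  esum c (M.edgeSet ∩ T.edgeSet) + esum p (M.edgeSet \ T.edgeSet)

/-- Total price of the blue edges of `M`. -/
noncomputable def blueRevenue (T : SimpleGraph V) (p : Sym2 V → ℝ) (M : SimpleGraph V) : ℝ :=
  esum p (M.edgeSet \ T.edgeSet)

/-- The leader's revenue once `F` and `p` are fixed: the follower selects a
minimum-weight spanning tree of `T ⊔ F` and, among those, one maximizing the
total price of the blue edges it contains. -/
noncomputable def followerRevenue (T : SimpleGraph V) (c : Sym2 V → ℝ)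
    (F : SimpleGraph V) (p : Sym2 V → ℝ) : ℝ :=
  sSup {r | ∃ M : SimpleGraph V, IsSpanningTreeOf (T ⊔ F) M ∧
    (∀ M' : SimpleGraph V, IsSpanningTreeOf (T ⊔ F) M' →
        weight T c p M ≤ weight T c p M') ∧
    r = blueRevenue T p M}

/-- `F` is a set of blue edges: none of its edges is a red edge. -/
def IsBlueSet (T F : SimpleGraph V) : Prop := F ≤ Tᶜ

/-- `r(F)`: the best revenue the leader can obtain from the activated set `F`. -/
noncomputable def revenueOf (T : SimpleGraph V) (c : Sym2 V → ℝ) (F : SimpleGraph V) : ℝ :=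
  sSup {r | ∃ p : Sym2 V → ℝ, (∀ e ∈ F.edgeSet, 0 ≤ p e) ∧ r = followerRevenue T c F p}

/-- Optimal revenue `r*(T, c)` of the StackMST(0,0) game on the red tree `T`. -/
noncomputable def optRevenue (T : SimpleGraph V) (c : Sym2 V → ℝ) : ℝ :=
  sSup {r | ∃ (F : SimpleGraph V) (p : Sym2 V → ℝ), IsBlueSet T F ∧
    (∀ e ∈ F.edgeSet, 0 ≤ p e) ∧ r = followerRevenue T c F p}

/-- Total cost `c(T)` of the red edges. -/
noncomputable def redCost (T : SimpleGraph V) (c : Sym2 V → ℝ) : ℝ := esum c T.edgeSet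

/-- Optimal revenue of the budgeted game StackMST(γ, Δ). -/
noncomputable def gammaOptRevenue (T : SimpleGraph V) (c γ : Sym2 V → ℝ) (Δ : ℝ) : ℝ :=
  sSup {r | ∃ F : SimpleGraph V, IsBlueSet T F ∧ esum γ F.edgeSet ≤ Δ ∧
    r = revenueOf T c F}

end StackMST

namespace StackMST

/-- The star graph on `V` centered at `v0`: `v0` is joined to every other vertex. -/
def starGraph {V : Type*} (v0 : V) : SimpleGraph V :=
  SimpleGraph.fromRel (fun u _ => u = v0)

end StackMST

open StackMST

/-! Let `m` be a leaf whose red edge `s(v0, m)` is cheapest, and offer the blue edges `s(m, x)`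
(`x ≠ v0, m`), pricing `s(m, x)` at the cost of `s(v0, x)`. Then every available edge at a vertex
`x ≠ v0` weighs at least `c s(v0, x)`, so charging each `x ≠ v0` to the first edge of a shortest
path to `v0` shows that every spanning tree weighs at least `c(S)`. The star centred at `m` attains
this bound and contains all the blue edges, so the revenue is
`c(S) - c s(v0, m) ≥ (1 - 1/t) c(S) ≥ (2/3) c(S)`. -/

open Finset

namespace SimpleGraph

variable {V : Type*} {G : SimpleGraph V}

theorem Connected.exists_adj_dist_lt (hG : G.Connected) {x r : V} (hx : x ≠ r) :
    ∃ y, G.Adj x y ∧ G.dist y r < G.dist x r := by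
  obtain ⟨p, hp⟩ := hG.exists_walk_length_eq_dist x r
  have hp_nil : ¬p.Nil := Walk.not_nil_of_ne hx
  refine ⟨p.snd, p.adj_snd hp_nil, ?_⟩
  calc G.dist p.snd r ≤ p.tail.length := dist_le _
    _ < p.length := by rw [← p.length_tail_add_one hp_nil]; omega
    _ = G.dist x r := hp

theorem Connected.sum_le_sum_edgeFinset [Fintype V] [DecidableEq V] [Fintype G.edgeSet]
    (hG : G.Connected) (r : V) {g : V → ℝ} {w : Sym2 V → ℝ} (hw : ∀ e ∈ G.edgeSet, 0 ≤ w e)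
    (hgw : ∀ x y, x ≠ r → G.Adj x y → g x ≤ w s(x, y)) :
    ∑ x ∈ univ.erase r, g x ≤ ∑ e ∈ G.edgeFinset, w e := by
  choose! next hnext_adj hnext_lt using fun x (hx : x ≠ r) => hG.exists_adj_dist_lt hx
  have hinj : Set.InjOn (fun x => s(x, next x)) ↑(univ.erase r) := by
    intro x hx y hy hxy
    simp only [mem_coe, mem_erase, mem_univ, and_true] at hx hy
    rcases Sym2.eq_iff.1 hxy with ⟨hxy, -⟩ | ⟨hx_next, hy_next⟩
    · exact hxy
    · have hy_lt := hnext_lt x hx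
      have hx_lt := hnext_lt y hy
      rw [hy_next] at hy_lt
      rw [← hx_next] at hx_lt
      omega
  calc ∑ x ∈ univ.erase r, g x ≤ ∑ x ∈ univ.erase r, w s(x, next x) :=
        sum_le_sum fun x hx => hgw x _ (ne_of_mem_erase hx) (hnext_adj x (ne_of_mem_erase hx))
    _ = ∑ e ∈ (univ.erase r).image fun x => s(x, next x), w e := (sum_image hinj).symm
    _ ≤ ∑ e ∈ G.edgeFinset, w e := by
        refine sum_le_sum_of_subset_of_nonneg ?_ fun e he _ => hw e (mem_edgeFinset.1 he)
        intro e he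
        obtain ⟨x, hx, rfl⟩ := mem_image.1 he
        exact mem_edgeFinset.2 (hnext_adj x (ne_of_mem_erase hx))

end SimpleGraph

theorem Finset.two_div_three_mul_sum_le_sum_erase_of_forall_le {ι : Type*} [DecidableEq ι]
    {s : Finset ι} {f : ι → ℝ} {a : ι} (ha : a ∈ s) (hmin : ∀ x ∈ s, f a ≤ f x)
    (hfa : 0 ≤ f a) (hs : 3 ≤ #s) :
    2 / 3 * ∑ x ∈ s, f x ≤ ∑ x ∈ s.erase a, f x := by
  have hcard : (#s : ℝ) * f a ≤ ∑ x ∈ s, f x := by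
    simpa [nsmul_eq_mul] using card_nsmul_le_sum s f (f a) hmin
  have hs' : (3 : ℝ) ≤ #s := by exact_mod_cast hs
  have := add_sum_erase s f ha
  nlinarith

namespace StackMST

variable {V : Type*}

theorem esum_nonneg {w : Sym2 V → ℝ} {s : Set (Sym2 V)} (hw : ∀ e ∈ s, 0 ≤ w e) :
    0 ≤ esum w s :=
  finsum_nonneg fun e => finsum_nonneg fun he => hw e he

theorem esum_edgeSet (w : Sym2 V → ℝ) (G : SimpleGraph V) [Fintype G.edgeSet] :
    esum w G.edgeSet = ∑ e ∈ G.edgeFinset, w e := by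
  rw [esum, ← SimpleGraph.coe_edgeFinset, finsum_mem_coe_finset]

theorem weight_eq_esum_piecewise [Finite V] (T : SimpleGraph V) (c p : Sym2 V → ℝ)
    [DecidablePred (· ∈ T.edgeSet)] (M : SimpleGraph V) :
    weight T c p M = esum (T.edgeSet.piecewise c p) M.edgeSet := by
  rw [weight, esum, esum, esum, ← finsum_mem_inter_add_sdiff T.edgeSet (Set.toFinite M.edgeSet)]
  congr 1
  · exact finsum_mem_congr rfl fun e he => (Set.piecewise_eq_of_mem _ _ _ he.2).symm
  · exact finsum_mem_congr rfl fun e he => (Set.piecewise_eq_of_notMem _ _ _ he.2).symm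

theorem blueRevenue_eq_weight (T : SimpleGraph V) (p : Sym2 V → ℝ) (M : SimpleGraph V) :
    blueRevenue T p M = weight T 0 p M := by
  simp [blueRevenue, weight, esum]

def IsMinSpanningTree (T : SimpleGraph V) (c : Sym2 V → ℝ) (F : SimpleGraph V)
    (p : Sym2 V → ℝ) (M : SimpleGraph V) : Prop :=
  IsSpanningTreeOf (T ⊔ F) M ∧
    ∀ M' : SimpleGraph V, IsSpanningTreeOf (T ⊔ F) M' → weight T c p M ≤ weight T c p M'

section Revenue

variable {T F M : SimpleGraph V} {c p : Sym2 V → ℝ}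

theorem IsMinSpanningTree.blueRevenue_le_redCost (hT : T.IsTree)
    (hc : ∀ e ∈ T.edgeSet, 0 ≤ c e) (hM : IsMinSpanningTree T c F p M) :
    blueRevenue T p M ≤ redCost T c := by
  have hweight : weight T c p M ≤ weight T c p T := hM.2 T ⟨le_sup_left, hT⟩
  have hred : 0 ≤ esum c (M.edgeSet ∩ T.edgeSet) := esum_nonneg fun e he => hc e he.2
  rw [weight, weight, Set.inter_self, Set.sdiff_self, show esum p ∅ = 0 from finsum_mem_empty,
    add_zero] at hweight
  rw [blueRevenue, redCost]
  linarith

theorem followerRevenue_le_redCost (hT : T.IsTree) (hc : ∀ e ∈ T.edgeSet, 0 ≤ c e) :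
    followerRevenue T c F p ≤ redCost T c := by
  refine Real.sSup_le ?_ (esum_nonneg hc)
  rintro _ ⟨M, hM, hmin, rfl⟩
  exact IsMinSpanningTree.blueRevenue_le_redCost hT hc ⟨hM, hmin⟩

theorem IsMinSpanningTree.blueRevenue_le_optRevenue (hT : T.IsTree)
    (hc : ∀ e ∈ T.edgeSet, 0 ≤ c e) (hF : IsBlueSet T F) (hp : ∀ e ∈ F.edgeSet, 0 ≤ p e)
    (hM : IsMinSpanningTree T c F p M) :
    blueRevenue T p M ≤ optRevenue T c := by
  have hfollower : blueRevenue T p M ≤ followerRevenue T c F p := by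
    refine le_csSup ⟨redCost T c, ?_⟩ ⟨M, hM.1, hM.2, rfl⟩
    rintro _ ⟨M', hM', hmin, rfl⟩
    exact IsMinSpanningTree.blueRevenue_le_redCost hT hc ⟨hM', hmin⟩
  refine hfollower.trans (le_csSup ⟨redCost T c, ?_⟩ ⟨F, p, hF, hp, rfl⟩)
  rintro _ ⟨F', p', -, -, rfl⟩
  exact followerRevenue_le_redCost hT hc

end Revenue

theorem isBlueSet_sdiff (T M : SimpleGraph V) : IsBlueSet T (M \ T) :=
  fun _ _ h => ⟨h.1.ne, h.2⟩

theorem starGraph_adj {r u v : V} : (starGraph r).Adj u v ↔ u ≠ v ∧ (u = r ∨ v = r) :=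
  SimpleGraph.starGraph_adj

theorem isTree_starGraph (r : V) : (starGraph r).IsTree :=
  SimpleGraph.isTree_starGraph r

theorem edgeSet_starGraph [Fintype V] [DecidableEq V] (r : V) :
    (starGraph r).edgeSet = ↑((univ.erase r).image fun x => s(r, x)) := by
  ext e
  induction e using Sym2.ind with
  | _ u v =>
    simp only [SimpleGraph.mem_edgeSet, starGraph_adj, coe_image, mem_coe, mem_erase, mem_univ,
      and_true, Set.mem_image]
    constructor
    · rintro ⟨huv, rfl | rfl⟩
      · exact ⟨v, huv.symm, rfl⟩
      · exact ⟨u, huv, Sym2.eq_swap⟩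
    · rintro ⟨x, hx, hrx⟩
      rcases Sym2.eq_iff.1 hrx with ⟨rfl, rfl⟩ | ⟨rfl, rfl⟩
      exacts [⟨hx.symm, Or.inl rfl⟩, ⟨hx, Or.inr rfl⟩]

theorem esum_starGraph [Fintype V] [DecidableEq V] (w : Sym2 V → ℝ) (r : V) :
    esum w (starGraph r).edgeSet = ∑ x ∈ univ.erase r, w s(r, x) := by
  rw [edgeSet_starGraph, esum, finsum_mem_coe_finset,
    sum_image fun _ _ _ _ h => Sym2.congr_right.1 h]

theorem ncard_edgeSet_starGraph [Fintype V] [DecidableEq V] (r : V) :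
    (starGraph r).edgeSet.ncard = #(univ.erase r) := by
  rw [edgeSet_starGraph, Set.ncard_coe_finset,
    card_image_of_injective _ fun _ _ h => Sym2.congr_right.1 h]

open Classical in
/-- The blue edge `s(m, x)` is priced at the cost of the red edge `s(v0, x)`. -/
noncomputable def swapPrice (c : Sym2 V → ℝ) (v0 m : V) (e : Sym2 V) : ℝ :=
  c (e.map (Equiv.swap v0 m))

open Classical in
noncomputable def starWeight (c : Sym2 V → ℝ) (v0 m : V) : Sym2 V → ℝ :=
  (starGraph v0).edgeSet.piecewise c (swapPrice c v0 m)

section SwapPrice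

variable {c : Sym2 V → ℝ} {v0 m : V}

theorem swapPrice_mk_of_ne {x : V} (hx0 : x ≠ v0) (hxm : x ≠ m) :
    swapPrice c v0 m s(m, x) = c s(v0, x) := by
  classical
  rw [swapPrice, Sym2.map_mk, Equiv.swap_apply_right, Equiv.swap_apply_of_ne_of_ne hx0 hxm]

theorem weight_swapPrice [Finite V] (M : SimpleGraph V) :
    weight (starGraph v0) c (swapPrice c v0 m) M = esum (starWeight c v0 m) M.edgeSet := by
  classical
  exact weight_eq_esum_piecewise _ _ _ M

theorem weight_starGraph_swapPrice [Fintype V] [DecidableEq V] (hm : m ≠ v0)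
    (c' : Sym2 V → ℝ) :
    weight (starGraph v0) c' (swapPrice c v0 m) (starGraph m) =
      c' s(v0, m) + ∑ x ∈ (univ.erase v0).erase m, c s(v0, x) := by
  classical
  rw [weight_eq_esum_piecewise, esum_starGraph, ← add_sum_erase _ _ (mem_erase.2 ⟨hm.symm,
    mem_univ v0⟩), erase_right_comm]
  congr 1
  · have hred : s(m, v0) ∈ (starGraph v0).edgeSet := starGraph_adj.2 ⟨hm, Or.inr rfl⟩
    rw [Set.piecewise_eq_of_mem _ _ _ hred, Sym2.eq_swap]
  · refine sum_congr rfl fun x hx => ?_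
    obtain ⟨hxm, hx0⟩ := mem_erase.1 hx
    have hx0 : x ≠ v0 := ne_of_mem_erase hx0
    have hred : s(m, x) ∉ (starGraph v0).edgeSet := fun h =>
      (starGraph_adj.1 h).2.elim hm hx0
    rw [Set.piecewise_eq_of_notMem _ _ _ hred, swapPrice_mk_of_ne hx0 hxm]

theorem le_starWeight (hmin : ∀ x ≠ v0, c s(v0, m) ≤ c s(v0, x)) {x y : V} (hx : x ≠ v0)
    (hxy : (starGraph v0 ⊔ starGraph m).Adj x y) : c s(v0, x) ≤ starWeight c v0 m s(x, y) := by
  classical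
  by_cases hred : s(x, y) ∈ (starGraph v0).edgeSet
  · obtain rfl : y = v0 := (starGraph_adj.1 hred).2.resolve_left hx
    rw [starWeight, Set.piecewise_eq_of_mem _ _ _ hred, Sym2.eq_swap]
  rw [starWeight, Set.piecewise_eq_of_notMem _ _ _ hred]
  obtain ⟨hne, rfl | rfl⟩ := starGraph_adj.1 (hxy.resolve_left hred)
  · have hy : y ≠ v0 := fun hy => hred (starGraph_adj.2 ⟨hne, Or.inr hy⟩)
    rw [swapPrice_mk_of_ne hy hne.symm]
    exact hmin y hy
  · rw [Sym2.eq_swap (a := x), swapPrice_mk_of_ne hx hne]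

theorem starWeight_nonneg (hmin : ∀ x ≠ v0, c s(v0, m) ≤ c s(v0, x))
    (hc : ∀ x ≠ v0, 0 ≤ c s(v0, x)) {e : Sym2 V}
    (he : e ∈ (starGraph v0 ⊔ starGraph m).edgeSet) : 0 ≤ starWeight c v0 m e := by
  induction e using Sym2.ind with
  | _ x y =>
    by_cases hx : x = v0
    · subst hx
      rw [SimpleGraph.mem_edgeSet] at he
      rw [Sym2.eq_swap]
      exact (hc y he.ne.symm).trans (le_starWeight hmin he.ne.symm (SimpleGraph.adj_symm _ he))
    · exact (hc x hx).trans (le_starWeight hmin hx he)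

theorem swapPrice_nonneg (hmin : ∀ x ≠ v0, c s(v0, m) ≤ c s(v0, x))
    (hc : ∀ x ≠ v0, 0 ≤ c s(v0, x)) {e : Sym2 V}
    (he : e ∈ (starGraph m \ starGraph v0).edgeSet) : 0 ≤ swapPrice c v0 m e := by
  have hle : starGraph m \ starGraph v0 ≤ starGraph v0 ⊔ starGraph m :=
    sdiff_le.trans le_sup_right
  have hblue : e ∉ (starGraph v0).edgeSet := by
    rw [SimpleGraph.edgeSet_sdiff] at he
    exact he.2
  classical
  have := starWeight_nonneg hmin hc (SimpleGraph.edgeSet_mono hle he)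
  rwa [starWeight, Set.piecewise_eq_of_notMem _ _ _ hblue] at this

theorem isMinSpanningTree_starGraph [Finite V] (hm : m ≠ v0)
    (hmin : ∀ x ≠ v0, c s(v0, m) ≤ c s(v0, x)) (hc : ∀ x ≠ v0, 0 ≤ c s(v0, x)) :
    IsMinSpanningTree (starGraph v0) c (starGraph m \ starGraph v0) (swapPrice c v0 m)
      (starGraph m) := by
  classical
  have := Fintype.ofFinite V
  rw [IsMinSpanningTree, sup_sdiff_self_right]
  refine ⟨⟨le_sup_right, isTree_starGraph m⟩, fun M ⟨hle, hM⟩ => ?_⟩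
  rw [weight_starGraph_swapPrice hm,
    add_sum_erase _ (fun x => c s(v0, x)) (mem_erase.2 ⟨hm, mem_univ m⟩), weight_swapPrice,
    esum_edgeSet]
  exact hM.connected.sum_le_sum_edgeFinset v0
    (fun e he => starWeight_nonneg hmin hc (SimpleGraph.edgeSet_mono hle he))
    fun x y hx hxy => le_starWeight hmin hx (hle hxy)

end SwapPrice

end StackMST

/-- For the StackMST(0,0) game whose red tree is a star `S` with
`t ≥ 3` edges and nonnegative edge costs, the optimal revenue satisfies
`r*(S, c) ≥ (2/3)·c(S)`. -/
theorem stackMST_star_two_thirds {V : Type*} [Finite V] (v0 : V)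
    (ht : 3 ≤ Set.ncard ((starGraph v0).edgeSet))
    (c : Sym2 V → ℝ) (hc : ∀ e ∈ (starGraph v0).edgeSet, 0 ≤ c e) :
    (2 / 3 : ℝ) * redCost (starGraph v0) c ≤ optRevenue (starGraph v0) c := by
  classical
  have := Fintype.ofFinite V
  have hc' : ∀ x ≠ v0, 0 ≤ c s(v0, x) := fun x hx =>
    hc _ (starGraph_adj.2 ⟨hx.symm, Or.inl rfl⟩)
  rw [ncard_edgeSet_starGraph] at ht
  obtain ⟨m, hm, hmin⟩ := (univ.erase v0).exists_min_image (fun x => c s(v0, x))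
    (card_pos.1 (by omega))
  have hm0 : m ≠ v0 := ne_of_mem_erase hm
  have hmin' : ∀ x ≠ v0, c s(v0, m) ≤ c s(v0, x) := fun x hx =>
    hmin x (mem_erase.2 ⟨hx, mem_univ x⟩)
  calc 2 / 3 * redCost (starGraph v0) c
      = 2 / 3 * ∑ x ∈ univ.erase v0, c s(v0, x) := by rw [redCost, esum_starGraph]
    _ ≤ ∑ x ∈ (univ.erase v0).erase m, c s(v0, x) :=
        two_div_three_mul_sum_le_sum_erase_of_forall_le hm hmin (hc' m hm0) ht
    _ = blueRevenue (starGraph v0) (swapPrice c v0 m) (starGraph m) := by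
        rw [blueRevenue_eq_weight, weight_starGraph_swapPrice hm0, Pi.zero_apply, zero_add]
    _ ≤ optRevenue (starGraph v0) c :=
        (isMinSpanningTree_starGraph hm0 hmin' hc').blueRevenue_le_optRevenue
          (isTree_starGraph v0) hc (isBlueSet_sdiff _ _) fun e he => swapPrice_nonneg hmin' hc' he
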